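/- arXiv:1702.07278 — 5 statements merged into one kernel-verified Lean document; each statement's English description precedes it below -/
import Mathlib

section
/- Let m, q be positive integers, let D ∈ ℝ^{m×m} and R ∈ ℝ^{q×q} be symmetric positive definite, and let L ∈ ℝ^{m×m}, H ∈ ℝ^{q×m}, b ∈ ℝ^m, d ∈ ℝ^q. Define J̃(v) = (Lv − b)ᵀ D⁻¹ (Lv − b) + (Hv − d)ᵀ R⁻¹ (Hv − d). Then a triple (λ, μ, δx) ∈ ℝ^m × ℝ^q × ℝ^m satisfies the saddle point system D λ + L δx = b, R μ + H δx = d, Lᵀ λ + Hᵀ μ = 0 if and only if λ = D⁻¹(b − L δx), μ = R⁻¹(d − H δx) and δx is a global minimiser of J̃. -/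
open Matrix

/-- The linearised weak constraint 4D-Var cost function
`J̃(v) = (Lv − b)ᵀ D⁻¹ (Lv − b) + (Hv − d)ᵀ R⁻¹ (Hv − d)`. -/
noncomputable def costJ {m q : ℕ} (D : Matrix (Fin m) (Fin m) ℝ)
    (R : Matrix (Fin q) (Fin q) ℝ) (L : Matrix (Fin m) (Fin m) ℝ)
    (H : Matrix (Fin q) (Fin m) ℝ) (b : Fin m → ℝ) (d : Fin q → ℝ)
    (v : Fin m → ℝ) : ℝ :=
  (L *ᵥ v - b) ⬝ᵥ (D⁻¹ *ᵥ (L *ᵥ v - b)) + (H *ᵥ v - d) ⬝ᵥ (R⁻¹ *ᵥ (H *ᵥ v - d))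

namespace SaddleAux

lemma quad_nonneg {n : ℕ} {A : Matrix (Fin n) (Fin n) ℝ} (hA : A.PosDef)
    (x : Fin n → ℝ) : 0 ≤ x ⬝ᵥ (A *ᵥ x) := by
  rcases eq_or_ne x 0 with h | h
  · simp [h]
  · simpa using (hA.dotProduct_mulVec_pos h).le

lemma eq_zero_of_quad_nonpos {n : ℕ} {A : Matrix (Fin n) (Fin n) ℝ} (hA : A.PosDef)
    {x : Fin n → ℝ} (h : x ⬝ᵥ (A *ᵥ x) ≤ 0) : x = 0 := by
  by_contra hx
  have := hA.dotProduct_mulVec_pos hx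
  simp at this
  linarith

lemma symm_dot {n : ℕ} {A : Matrix (Fin n) (Fin n) ℝ} (hA : Aᵀ = A)
    (x y : Fin n → ℝ) : x ⬝ᵥ (A *ᵥ y) = y ⬝ᵥ (A *ᵥ x) := by
  rw [dotProduct_mulVec, ← mulVec_transpose, hA, dotProduct_comm]

lemma dot_transpose {n k : ℕ} (L : Matrix (Fin k) (Fin n) ℝ)
    (e : Fin n → ℝ) (x : Fin k → ℝ) : e ⬝ᵥ (Lᵀ *ᵥ x) = (L *ᵥ e) ⬝ᵥ x := by
  rw [dotProduct_mulVec, ← mulVec_transpose, transpose_transpose]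

lemma quad_expand {n : ℕ} {A : Matrix (Fin n) (Fin n) ℝ} (hA : Aᵀ = A)
    (w e : Fin n → ℝ) :
    (w + e) ⬝ᵥ (A *ᵥ (w + e)) =
      w ⬝ᵥ (A *ᵥ w) + 2 * (e ⬝ᵥ (A *ᵥ w)) + e ⬝ᵥ (A *ᵥ e) := by
  have h := symm_dot hA w e
  simp only [mulVec_add, dotProduct_add, add_dotProduct, h]
  ring

lemma solve_iff {n : ℕ} {M : Matrix (Fin n) (Fin n) ℝ} (h : IsUnit M.det)
    (x y : Fin n → ℝ) : M *ᵥ x = y ↔ x = M⁻¹ *ᵥ y := by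
  constructor
  · intro h'
    rw [← h', mulVec_mulVec, nonsing_inv_mul M h, one_mulVec]
  · intro h'
    rw [h', mulVec_mulVec, mul_nonsing_inv M h, one_mulVec]

/-- The fundamental expansion of the cost function around `δx`. -/
lemma cost_expand {m q : ℕ} (D : Matrix (Fin m) (Fin m) ℝ)
    (R : Matrix (Fin q) (Fin q) ℝ) (L : Matrix (Fin m) (Fin m) ℝ)
    (H : Matrix (Fin q) (Fin m) ℝ) (b : Fin m → ℝ) (d : Fin q → ℝ)
    (hD : (D⁻¹)ᵀ = D⁻¹) (hR : (R⁻¹)ᵀ = R⁻¹) (δx v : Fin m → ℝ) :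
    costJ D R L H b d v = costJ D R L H b d δx
      + 2 * ((v - δx) ⬝ᵥ (Lᵀ *ᵥ (D⁻¹ *ᵥ (L *ᵥ δx - b))
              + Hᵀ *ᵥ (R⁻¹ *ᵥ (H *ᵥ δx - d))))
      + (L *ᵥ (v - δx)) ⬝ᵥ (D⁻¹ *ᵥ (L *ᵥ (v - δx)))
      + (H *ᵥ (v - δx)) ⬝ᵥ (R⁻¹ *ᵥ (H *ᵥ (v - δx))) := by
  have h1 : L *ᵥ v - b = (L *ᵥ δx - b) + L *ᵥ (v - δx) := by
    rw [mulVec_sub]; abel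
  have h2 : H *ᵥ v - d = (H *ᵥ δx - d) + H *ᵥ (v - δx) := by
    rw [mulVec_sub]; abel
  rw [costJ, h1, h2, quad_expand hD, quad_expand hR, costJ,
    dotProduct_add, dot_transpose, dot_transpose]
  ring

end SaddleAux

open SaddleAux in
/-- `(λ, μ, δx)` satisfies the weak constraint 4D-Var saddle point system
`Dλ + Lδx = b`, `Rμ + Hδx = d`, `Lᵀλ + Hᵀμ = 0` iff `λ = D⁻¹(b − Lδx)`,
`μ = R⁻¹(d − Hδx)` and `δx` globally minimises the linearised cost function. -/
theorem saddle_point_iff_minimiser (m q : ℕ) (hm : 0 < m) (hq : 0 < q)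
    (D : Matrix (Fin m) (Fin m) ℝ) (R : Matrix (Fin q) (Fin q) ℝ)
    (hD : D.PosDef) (hR : R.PosDef)
    (L : Matrix (Fin m) (Fin m) ℝ) (H : Matrix (Fin q) (Fin m) ℝ)
    (b : Fin m → ℝ) (d : Fin q → ℝ)
    (lam : Fin m → ℝ) (mu : Fin q → ℝ) (δx : Fin m → ℝ) :
    (D *ᵥ lam + L *ᵥ δx = b ∧ R *ᵥ mu + H *ᵥ δx = d ∧
        Lᵀ *ᵥ lam + Hᵀ *ᵥ mu = 0) ↔
      (lam = D⁻¹ *ᵥ (b - L *ᵥ δx) ∧ mu = R⁻¹ *ᵥ (d - H *ᵥ δx) ∧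
        ∀ v : Fin m → ℝ, costJ D R L H b d δx ≤ costJ D R L H b d v) := by
  have hDdet : IsUnit D.det := isUnit_iff_ne_zero.2 hD.det_pos.ne'
  have hRdet : IsUnit R.det := isUnit_iff_ne_zero.2 hR.det_pos.ne'
  have hDi : (D⁻¹).PosDef := hD.inv
  have hRi : (R⁻¹).PosDef := hR.inv
  have hDs : (D⁻¹)ᵀ = D⁻¹ := by simpa [Matrix.IsHermitian] using hDi.isHermitian
  have hRs : (R⁻¹)ᵀ = R⁻¹ := by simpa [Matrix.IsHermitian] using hRi.isHermitian
  -- first two equations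
  have e1 : (D *ᵥ lam + L *ᵥ δx = b) ↔ lam = D⁻¹ *ᵥ (b - L *ᵥ δx) := by
    rw [← solve_iff hDdet]
    constructor <;> intro h <;> [rw [← h]; rw [h]] <;> abel
  have e2 : (R *ᵥ mu + H *ᵥ δx = d) ↔ mu = R⁻¹ *ᵥ (d - H *ᵥ δx) := by
    rw [← solve_iff hRdet]
    constructor <;> intro h <;> [rw [← h]; rw [h]] <;> abel
  -- the "gradient"
  set g : Fin m → ℝ := Lᵀ *ᵥ (D⁻¹ *ᵥ (L *ᵥ δx - b)) + Hᵀ *ᵥ (R⁻¹ *ᵥ (H *ᵥ δx - d))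
    with hg
  -- the third equation, given the first two, is `g = 0`
  have e3 : Lᵀ *ᵥ (D⁻¹ *ᵥ (b - L *ᵥ δx)) + Hᵀ *ᵥ (R⁻¹ *ᵥ (d - H *ᵥ δx)) = -g := by
    have hb : b - L *ᵥ δx = -(L *ᵥ δx - b) := by abel
    have hd : d - H *ᵥ δx = -(H *ᵥ δx - d) := by abel
    rw [hg, hb, hd, mulVec_neg, mulVec_neg, mulVec_neg, mulVec_neg]
    abel
  -- minimiser ↔ g = 0
  have hmin : (∀ v : Fin m → ℝ, costJ D R L H b d δx ≤ costJ D R L H b d v) ↔ g = 0 := by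
    constructor
    · intro hv
      set s : ℝ := g ⬝ᵥ g with hs
      set C : ℝ := (L *ᵥ g) ⬝ᵥ (D⁻¹ *ᵥ (L *ᵥ g)) + (H *ᵥ g) ⬝ᵥ (R⁻¹ *ᵥ (H *ᵥ g))
        with hC
      have hCnn : 0 ≤ C := add_nonneg (quad_nonneg hDi _) (quad_nonneg hRi _)
      have key : ∀ t : ℝ, 0 ≤ C * (t * t) + (-2 * s) * t + 0 := by
        intro t
        have h := cost_expand D R L H b d hDs hRs δx (δx - t • g)
        have hsub : δx - t • g - δx = -(t • g) := by abel
        rw [hsub] at h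
        have := hv (δx - t • g)
        rw [h, ← hg] at this
        simp only [mulVec_neg, mulVec_smul, neg_dotProduct, dotProduct_neg,
          smul_dotProduct, dotProduct_smul, neg_neg, smul_eq_mul] at this
        rw [hs, hC]
        nlinarith [this]
      have hdisc := discrim_le_zero key
      rw [discrim] at hdisc
      have hs0 : s ≤ 0 := by nlinarith [hdisc]
      have snn : 0 ≤ g ⬝ᵥ g := Finset.sum_nonneg fun i _ => mul_self_nonneg _
      exact dotProduct_self_eq_zero.1 (le_antisymm hs0 snn)
    · intro hg0 v
      have h := cost_expand D R L H b d hDs hRs δx v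
      rw [← hg, hg0] at h
      simp only [dotProduct_zero, mul_zero, add_zero] at h
      have := quad_nonneg hDi (L *ᵥ (v - δx))
      have := quad_nonneg hRi (H *ᵥ (v - δx))
      linarith
  constructor
  · rintro ⟨h1, h2, h3⟩
    have hl := e1.1 h1
    have hm2 := e2.1 h2
    refine ⟨hl, hm2, ?_⟩
    rw [hl, hm2, e3, neg_eq_zero] at h3
    exact hmin.2 h3
  · rintro ⟨hl, hm2, hv⟩
    refine ⟨e1.2 hl, e2.2 hm2, ?_⟩
    rw [hl, hm2, e3, neg_eq_zero]
    exact hmin.1 hv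
end

section
/- Let m, q be positive integers, let D ∈ ℝ^{m×m}, 𝓡 ∈ ℝ^{q×q}, 𝓗 ∈ ℝ^{q×m}, and suppose 𝓗 D 𝓗ᵀ + 𝓡 is invertible with inverse 𝓕 = (𝓗 D 𝓗ᵀ + 𝓡)⁻¹. Then the block matrix 𝓟 = [[D, 0, I_m], [0, 𝓡, 𝓗], [I_m, 𝓗ᵀ, 0]] ∈ ℝ^{(2m+q)×(2m+q)} is invertible, and 𝓟⁻¹ = [[𝓗ᵀ𝓕𝓗, −𝓗ᵀ𝓕, I_m − 𝓗ᵀ𝓕𝓗D], [−𝓕𝓗, 𝓕, 𝓕𝓗D], [I_m − D𝓗ᵀ𝓕𝓗, D𝓗ᵀ𝓕, D𝓗ᵀ𝓕𝓗D − D]]. -/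
open Matrix

/-- A 3×3 block matrix with row/column block sizes `m, q, m`, assembled from
nested `fromBlocks` (index type `(Fin m ⊕ Fin q) ⊕ Fin m`). -/
def block3 {m q : ℕ}
    (A11 : Matrix (Fin m) (Fin m) ℝ) (A12 : Matrix (Fin m) (Fin q) ℝ)
    (A13 : Matrix (Fin m) (Fin m) ℝ)
    (A21 : Matrix (Fin q) (Fin m) ℝ) (A22 : Matrix (Fin q) (Fin q) ℝ)
    (A23 : Matrix (Fin q) (Fin m) ℝ)
    (A31 : Matrix (Fin m) (Fin m) ℝ) (A32 : Matrix (Fin m) (Fin q) ℝ)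
    (A33 : Matrix (Fin m) (Fin m) ℝ) :
    Matrix ((Fin m ⊕ Fin q) ⊕ Fin m) ((Fin m ⊕ Fin q) ⊕ Fin m) ℝ :=
  Matrix.fromBlocks (Matrix.fromBlocks A11 A12 A21 A22)
    (Matrix.fromRows A13 A23) (Matrix.fromCols A31 A32) A33

lemma fromRows_add' {m₁ m₂ n : Type*} (A : Matrix m₁ n ℝ) (B : Matrix m₂ n ℝ)
    (C : Matrix m₁ n ℝ) (D : Matrix m₂ n ℝ) :
    fromRows A B + fromRows C D = fromRows (A + C) (B + D) := by
  ext (i | i) j <;> simp [fromRows_apply_inl, fromRows_apply_inr]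

lemma fromColumns_add' {m n₁ n₂ : Type*} (A : Matrix m n₁ ℝ) (B : Matrix m n₂ ℝ)
    (C : Matrix m n₁ ℝ) (D : Matrix m n₂ ℝ) :
    fromCols A B + fromCols C D = fromCols (A + C) (B + D) := by
  ext i (j | j) <;> simp [fromCols_apply_inl, fromCols_apply_inr]

set_option maxHeartbeats 1600000 in
/-- The inexact constraint preconditioner `𝓟 = [[D, 0, I], [0, 𝓡, 𝓗], [I, 𝓗ᵀ, 0]]`
(with constraint block approximated by the identity and exact observation block) is
invertible, with inverse expressed through `𝓕 = (𝓗D𝓗ᵀ + 𝓡)⁻¹`. -/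
theorem inexact_constraint_prec_H_inv (m q : ℕ) (hm : 0 < m) (hq : 0 < q)
    (D : Matrix (Fin m) (Fin m) ℝ)
    (𝓡 : Matrix (Fin q) (Fin q) ℝ) (𝓗 : Matrix (Fin q) (Fin m) ℝ)
    (hF : IsUnit (𝓗 * D * 𝓗ᵀ + 𝓡)) :
    IsUnit (block3 D 0 1 0 𝓡 𝓗 1 𝓗ᵀ 0) ∧
      (block3 D 0 1 0 𝓡 𝓗 1 𝓗ᵀ 0)⁻¹ =
        block3 (𝓗ᵀ * (𝓗 * D * 𝓗ᵀ + 𝓡)⁻¹ * 𝓗)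
          (-(𝓗ᵀ * (𝓗 * D * 𝓗ᵀ + 𝓡)⁻¹))
          (1 - 𝓗ᵀ * (𝓗 * D * 𝓗ᵀ + 𝓡)⁻¹ * 𝓗 * D)
          (-((𝓗 * D * 𝓗ᵀ + 𝓡)⁻¹ * 𝓗))
          ((𝓗 * D * 𝓗ᵀ + 𝓡)⁻¹)
          ((𝓗 * D * 𝓗ᵀ + 𝓡)⁻¹ * 𝓗 * D)
          (1 - D * 𝓗ᵀ * (𝓗 * D * 𝓗ᵀ + 𝓡)⁻¹ * 𝓗)
          (D * 𝓗ᵀ * (𝓗 * D * 𝓗ᵀ + 𝓡)⁻¹)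
          (D * 𝓗ᵀ * (𝓗 * D * 𝓗ᵀ + 𝓡)⁻¹ * 𝓗 * D - D) := by
  have hdet : IsUnit (𝓗 * D * 𝓗ᵀ + 𝓡).det :=
    (Matrix.isUnit_iff_isUnit_det _).mp hF
  have hSF : (𝓗 * D * 𝓗ᵀ + 𝓡) * (𝓗 * D * 𝓗ᵀ + 𝓡)⁻¹ = 1 :=
    Matrix.mul_nonsing_inv _ hdet
  have hA : 𝓡 * (𝓗 * D * 𝓗ᵀ + 𝓡)⁻¹ = 1 - 𝓗 * D * 𝓗ᵀ * (𝓗 * D * 𝓗ᵀ + 𝓡)⁻¹ := by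
    rw [eq_sub_iff_add_eq, ← add_mul, add_comm 𝓡 (𝓗 * D * 𝓗ᵀ)]
    exact hSF
  have hPQ : (block3 D 0 1 0 𝓡 𝓗 1 𝓗ᵀ 0) *
      (block3 (𝓗ᵀ * (𝓗 * D * 𝓗ᵀ + 𝓡)⁻¹ * 𝓗)
          (-(𝓗ᵀ * (𝓗 * D * 𝓗ᵀ + 𝓡)⁻¹))
          (1 - 𝓗ᵀ * (𝓗 * D * 𝓗ᵀ + 𝓡)⁻¹ * 𝓗 * D)
          (-((𝓗 * D * 𝓗ᵀ + 𝓡)⁻¹ * 𝓗))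
          ((𝓗 * D * 𝓗ᵀ + 𝓡)⁻¹)
          ((𝓗 * D * 𝓗ᵀ + 𝓡)⁻¹ * 𝓗 * D)
          (1 - D * 𝓗ᵀ * (𝓗 * D * 𝓗ᵀ + 𝓡)⁻¹ * 𝓗)
          (D * 𝓗ᵀ * (𝓗 * D * 𝓗ᵀ + 𝓡)⁻¹)
          (D * 𝓗ᵀ * (𝓗 * D * 𝓗ᵀ + 𝓡)⁻¹ * 𝓗 * D - D)) = 1 := by
    rw [show (1 : Matrix ((Fin m ⊕ Fin q) ⊕ Fin m) ((Fin m ⊕ Fin q) ⊕ Fin m) ℝ) =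
        fromBlocks (fromBlocks 1 0 0 1) (fromRows 0 0) (fromCols 0 0) 1 by
      rw [fromRows_zero, fromCols_zero, fromBlocks_one, fromBlocks_one]]
    simp only [block3, fromBlocks_multiply, fromRows_mul_fromCols,
      fromCols_mul_fromRows, fromCols_mul_fromBlocks, fromBlocks_mul_fromRows,
      fromRows_mul, mul_fromCols,
      fromCols_fromRows_eq_fromBlocks, fromRows_fromCols_eq_fromBlocks, fromBlocks_add, fromRows_add', fromColumns_add',
      fromBlocks_inj, fromRows_ext_iff, fromCols_ext_iff]
    repeat' apply And.intro
    all_goals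
      simp only [neg_one_zsmul, Matrix.neg_mul, Matrix.mul_neg, Matrix.mul_zero,
        Matrix.zero_mul, Matrix.mul_one, Matrix.one_mul, Matrix.mul_add, Matrix.add_mul,
        Matrix.mul_sub, Matrix.sub_mul, sub_eq_add_neg, neg_add_rev, neg_neg,
        zero_add, add_zero, ← Matrix.mul_assoc, hA]
    all_goals abel
  exact ⟨(Matrix.isUnit_iff_isUnit_det _).mpr (Matrix.isUnit_det_of_right_inverse hPQ),
    Matrix.inv_eq_right_inv hPQ⟩
end

section
/- Let m, q be positive integers, let D ∈ ℝ^{m×m} and 𝓡 ∈ ℝ^{q×q} be symmetric positive definite, let L ∈ ℝ^{m×m} be invertible, and let 𝓗 ∈ ℝ^{q×m}. Let 𝓐 = [[D, 0, L], [0, 𝓡, 𝓗], [Lᵀ, 𝓗ᵀ, 0]], let S = −Lᵀ D⁻¹ L − 𝓗ᵀ 𝓡⁻¹ 𝓗 ∈ ℝ^{m×m} be the exact Schur complement, and let 𝓟_D = [[D, 0, 0], [0, 𝓡, 0], [0, 0, S]] be the block diagonal preconditioner. Then S is invertible, and every eigenvalue τ ∈ ℂ of 𝓟_D⁻¹𝓐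 satisfies τ = 1 or τ² − τ + 1 = 0; in particular 𝓟_D⁻¹𝓐 has at most three distinct eigenvalues, namely 1, (1 + i√3)/2 and (1 − i√3)/2. -/
open Matrix

private lemma aux_mulVec_eq_zero {n : Type*} [Fintype n] [DecidableEq n] {K : Type*} [Field K]
    {A : Matrix n n K} (hA : IsUnit A.det) {x : n → K} (h : A *ᵥ x = 0) : x = 0 := by
  have h2 : A⁻¹ *ᵥ (A *ᵥ x) = A⁻¹ *ᵥ (0 : n → K) := by rw [h]
  rwa [Matrix.mulVec_mulVec, Matrix.nonsing_inv_mul A hA, Matrix.one_mulVec,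
    Matrix.mulVec_zero] at h2

private lemma aux_block3_map {m q : ℕ} (f : ℝ → ℂ)
    (A11 : Matrix (Fin m) (Fin m) ℝ) (A12 : Matrix (Fin m) (Fin q) ℝ)
    (A13 : Matrix (Fin m) (Fin m) ℝ)
    (A21 : Matrix (Fin q) (Fin m) ℝ) (A22 : Matrix (Fin q) (Fin q) ℝ)
    (A23 : Matrix (Fin q) (Fin m) ℝ)
    (A31 : Matrix (Fin m) (Fin m) ℝ) (A32 : Matrix (Fin m) (Fin q) ℝ)
    (A33 : Matrix (Fin m) (Fin m) ℝ) :
    (block3 A11 A12 A13 A21 A22 A23 A31 A32 A33).map f =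
      Matrix.fromBlocks (Matrix.fromBlocks (A11.map f) (A12.map f) (A21.map f) (A22.map f))
        (Matrix.fromRows (A13.map f) (A23.map f))
        (Matrix.fromCols (A31.map f) (A32.map f)) (A33.map f) := by
  ext i j
  rcases i with (i | i) | i <;> rcases j with (j | j) | j <;> rfl

private lemma aux_blocks_mulVec {m q : ℕ}
    (A11 : Matrix (Fin m) (Fin m) ℂ) (A12 : Matrix (Fin m) (Fin q) ℂ)
    (A13 : Matrix (Fin m) (Fin m) ℂ)
    (A21 : Matrix (Fin q) (Fin m) ℂ) (A22 : Matrix (Fin q) (Fin q) ℂ)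
    (A23 : Matrix (Fin q) (Fin m) ℂ)
    (A31 : Matrix (Fin m) (Fin m) ℂ) (A32 : Matrix (Fin m) (Fin q) ℂ)
    (A33 : Matrix (Fin m) (Fin m) ℂ)
    (x : Fin m → ℂ) (y : Fin q → ℂ) (z : Fin m → ℂ) :
    (Matrix.fromBlocks (Matrix.fromBlocks A11 A12 A21 A22)
        (Matrix.fromRows A13 A23) (Matrix.fromCols A31 A32) A33) *ᵥ
        (Sum.elim (Sum.elim x y) z) =
      Sum.elim (Sum.elim (A11 *ᵥ x + A12 *ᵥ y + A13 *ᵥ z) (A21 *ᵥ x + A22 *ᵥ y + A23 *ᵥ z))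
        (A31 *ᵥ x + A32 *ᵥ y + A33 *ᵥ z) := by
  funext i
  rcases i with (i | i) | i <;>
    simp [Matrix.fromBlocks_mulVec, Sum.elim_comp_inl, Sum.elim_comp_inr, add_assoc]

private lemma aux_posDef_conj {n : ℕ} {A : Matrix (Fin n) (Fin n) ℝ} (hA : A.PosDef)
    {B : Matrix (Fin n) (Fin n) ℝ} (hB : IsUnit B.det) : (Bᵀ * A * B).PosDef := by
  have hBt : Bᴴ = Bᵀ := Matrix.conjTranspose_eq_transpose_of_trivial B
  rw [← hBt]
  exact hA.conjTranspose_mul_mul_same (fun u v huv => sub_eq_zero.mp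
    (aux_mulVec_eq_zero hB (by rw [Matrix.mulVec_sub, huv, sub_self])))

/-- With the exact block diagonal Schur complement preconditioner
`𝓟_D = diag(D, 𝓡, S)`, `S = −LᵀD⁻¹L − 𝓗ᵀ𝓡⁻¹𝓗`, the Schur complement `S` is
invertible and every complex eigenvalue `τ` of `𝓟_D⁻¹𝓐` satisfies `τ = 1` or
`τ² − τ + 1 = 0`; in particular there are at most three distinct eigenvalues,
namely `1`, `(1 + i√3)/2` and `(1 − i√3)/2`. -/
theorem block_diag_schur_prec_eigenvalues (m q : ℕ) (hm : 0 < m) (hq : 0 < q)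
    (D : Matrix (Fin m) (Fin m) ℝ) (hD : D.PosDef)
    (𝓡 : Matrix (Fin q) (Fin q) ℝ) (h𝓡 : 𝓡.PosDef)
    (L : Matrix (Fin m) (Fin m) ℝ) (hL : IsUnit L)
    (𝓗 : Matrix (Fin q) (Fin m) ℝ) :
    IsUnit (-(Lᵀ * D⁻¹ * L) - 𝓗ᵀ * 𝓡⁻¹ * 𝓗) ∧
      ∀ τ ∈ spectrum ℂ
          (((block3 D 0 0 0 𝓡 0 0 0 (-(Lᵀ * D⁻¹ * L) - 𝓗ᵀ * 𝓡⁻¹ * 𝓗))⁻¹ *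
              block3 D 0 L 0 𝓡 𝓗 Lᵀ 𝓗ᵀ 0).map (algebraMap ℝ ℂ)),
        (τ = 1 ∨ τ ^ 2 - τ + 1 = 0) ∧
          (τ = 1 ∨ τ = (1 + Real.sqrt 3 * Complex.I) / 2 ∨
            τ = (1 - Real.sqrt 3 * Complex.I) / 2) := by
  classical
  set S : Matrix (Fin m) (Fin m) ℝ := -(Lᵀ * D⁻¹ * L) - 𝓗ᵀ * 𝓡⁻¹ * 𝓗 with hSdef
  set M : Matrix (Fin m) (Fin m) ℝ := Lᵀ * D⁻¹ * L + 𝓗ᵀ * 𝓡⁻¹ * 𝓗 with hMdef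
  have hLdet : IsUnit L.det := (Matrix.isUnit_iff_isUnit_det L).mp hL
  have hDdet : IsUnit D.det := (Matrix.isUnit_iff_isUnit_det D).mp hD.isUnit
  have hRdet : IsUnit 𝓡.det := (Matrix.isUnit_iff_isUnit_det 𝓡).mp h𝓡.isUnit
  -- M = LᵀD⁻¹L + 𝓗ᵀ𝓡⁻¹𝓗 is positive definite
  have hM : M.PosDef := by
    refine Matrix.PosDef.add_posSemidef (aux_posDef_conj hD.inv hLdet) ?_
    have := (h𝓡.inv.posSemidef).conjTranspose_mul_mul_same 𝓗
    rwa [Matrix.conjTranspose_eq_transpose_of_trivial] at this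
  have hSM : S = -M := by rw [hSdef, hMdef]; abel
  have hSunit : IsUnit S := by rw [hSM]; exact hM.isUnit.neg
  have hSdetUnit : IsUnit S.det := (Matrix.isUnit_iff_isUnit_det S).mp hSunit
  refine ⟨hSunit, ?_⟩
  intro τ hτ
  -- main dichotomy
  have key : τ = 1 ∨ τ ^ 2 - τ + 1 = 0 := by
    by_cases ht1 : τ = 1
    · exact Or.inl ht1
    by_cases ht2 : τ ^ 2 - τ + 1 = 0
    · exact Or.inr ht2
    exfalso
    set f : ℝ →+* ℂ := algebraMap ℝ ℂ with hfdef
    set P : Matrix ((Fin m ⊕ Fin q) ⊕ Fin m) ((Fin m ⊕ Fin q) ⊕ Fin m) ℝ :=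
      block3 D 0 0 0 𝓡 0 0 0 S with hPdef
    set A : Matrix ((Fin m ⊕ Fin q) ⊕ Fin m) ((Fin m ⊕ Fin q) ⊕ Fin m) ℝ :=
      block3 D 0 L 0 𝓡 𝓗 Lᵀ 𝓗ᵀ 0 with hAdef
    have hPdet : IsUnit P.det := by
      have hPd : P.det = D.det * 𝓡.det * S.det := by
        rw [hPdef, block3, Matrix.fromRows_zero, Matrix.fromCols_zero,
          Matrix.det_fromBlocks_zero₂₁, Matrix.det_fromBlocks_zero₂₁]
      rw [hPd]
      exact (hDdet.mul hRdet).mul hSdetUnit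
    -- eigenvector
    have hτ' : τ ∈ spectrum ℂ (Matrix.toLinAlgEquiv' ((P⁻¹ * A).map f)) := by
      rwa [AlgEquiv.spectrum_eq]
    have hev : Module.End.HasEigenvalue (Matrix.toLinAlgEquiv' ((P⁻¹ * A).map f)) τ :=
      Module.End.hasEigenvalue_iff_mem_spectrum.mpr hτ'
    obtain ⟨v, hv⟩ := hev.exists_hasEigenvector
    have hBv : ((P⁻¹ * A).map f) *ᵥ v = τ • v := by
      have := hv.apply_eq_smul
      rwa [Matrix.toLinAlgEquiv'_apply] at this
    have hmap : (P.map f) * ((P⁻¹ * A).map f) = A.map f := by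
      rw [← Matrix.map_mul, ← Matrix.mul_assoc, Matrix.mul_nonsing_inv P hPdet, Matrix.one_mul]
    have hAv : (A.map f) *ᵥ v = τ • ((P.map f) *ᵥ v) := by
      calc (A.map f) *ᵥ v = ((P.map f) * ((P⁻¹ * A).map f)) *ᵥ v := by rw [hmap]
        _ = (P.map f) *ᵥ (((P⁻¹ * A).map f) *ᵥ v) := by rw [← Matrix.mulVec_mulVec]
        _ = (P.map f) *ᵥ (τ • v) := by rw [hBv]
        _ = τ • ((P.map f) *ᵥ v) := Matrix.mulVec_smul _ _ _
    -- components
    set x : Fin m → ℂ := fun i => v (Sum.inl (Sum.inl i)) with hxdef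
    set y : Fin q → ℂ := fun i => v (Sum.inl (Sum.inr i)) with hydef
    set z : Fin m → ℂ := fun i => v (Sum.inr i) with hzdef
    have hv' : v = Sum.elim (Sum.elim x y) z := by
      funext i; rcases i with (i | i) | i <;> rfl
    have hzero : ∀ {a b : ℕ}, ((0 : Matrix (Fin a) (Fin b) ℝ).map f) = 0 :=
      fun {a b} => Matrix.map_zero _ (map_zero f)
    set Dc := D.map f with hDc
    set Rc := 𝓡.map f with hRc
    set Lc := L.map f with hLc
    set Hc := 𝓗.map f with hHc
    set Ltc := Lᵀ.map f with hLtc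
    set Htc := 𝓗ᵀ.map f with hHtc
    set Sc := S.map f with hSc
    have hA3 : A.map f = Matrix.fromBlocks (Matrix.fromBlocks Dc 0 0 Rc)
        (Matrix.fromRows Lc Hc) (Matrix.fromCols Ltc Htc) 0 := by
      rw [hAdef, aux_block3_map, hzero, hzero, hzero]
    have hP3 : P.map f = Matrix.fromBlocks (Matrix.fromBlocks Dc 0 0 Rc)
        (Matrix.fromRows 0 0) (Matrix.fromCols 0 0) Sc := by
      rw [hPdef, aux_block3_map, hzero, hzero, hzero]
    have keyv : Sum.elim (Sum.elim (Dc *ᵥ x + Lc *ᵥ z) (Rc *ᵥ y + Hc *ᵥ z))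
        (Ltc *ᵥ x + Htc *ᵥ y) =
        τ • Sum.elim (Sum.elim (Dc *ᵥ x) (Rc *ᵥ y)) (Sc *ᵥ z) := by
      have h := hAv
      rw [hv', hA3, hP3, aux_blocks_mulVec, aux_blocks_mulVec] at h
      simpa only [Matrix.zero_mulVec, add_zero, zero_add] using h
    have e1 : Dc *ᵥ x + Lc *ᵥ z = τ • (Dc *ᵥ x) := by
      funext i; exact congrFun keyv (Sum.inl (Sum.inl i))
    have e2 : Rc *ᵥ y + Hc *ᵥ z = τ • (Rc *ᵥ y) := by
      funext i; exact congrFun keyv (Sum.inl (Sum.inr i))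
    have e3 : Ltc *ᵥ x + Htc *ᵥ y = τ • (Sc *ᵥ z) := by
      funext i; exact congrFun keyv (Sum.inr i)
    -- rearranged
    have hLz : Lc *ᵥ z = (τ - 1) • (Dc *ᵥ x) := by
      rw [eq_sub_of_add_eq' e1, sub_smul, one_smul]
    have hHz : Hc *ᵥ z = (τ - 1) • (Rc *ᵥ y) := by
      rw [eq_sub_of_add_eq' e2, sub_smul, one_smul]
    set Dic := (D⁻¹).map f with hDic
    set Ric := (𝓡⁻¹).map f with hRic
    have hDD : Dic * Dc = 1 := by
      rw [hDic, hDc, ← Matrix.map_mul, Matrix.nonsing_inv_mul D hDdet,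
        Matrix.map_one _ (map_zero f) (map_one f)]
    have hRR : Ric * Rc = 1 := by
      rw [hRic, hRc, ← Matrix.map_mul, Matrix.nonsing_inv_mul 𝓡 hRdet,
        Matrix.map_one _ (map_zero f) (map_one f)]
    set Mc := M.map f with hMc
    have hMcEq : Mc = Ltc * Dic * Lc + Htc * Ric * Hc := by
      rw [hMc, hMdef, Matrix.map_add _ (map_add f)]
      simp only [Matrix.map_mul]
      rfl
    have c1 : (Ltc * Dic * Lc) *ᵥ z = (τ - 1) • (Ltc *ᵥ x) := by
      calc (Ltc * Dic * Lc) *ᵥ z = (Ltc * Dic) *ᵥ (Lc *ᵥ z) := by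
            rw [Matrix.mulVec_mulVec]
        _ = (Ltc * Dic) *ᵥ ((τ - 1) • (Dc *ᵥ x)) := by rw [hLz]
        _ = (τ - 1) • ((Ltc * Dic) *ᵥ (Dc *ᵥ x)) := Matrix.mulVec_smul _ _ _
        _ = (τ - 1) • ((Ltc * Dic * Dc) *ᵥ x) := by rw [Matrix.mulVec_mulVec]
        _ = (τ - 1) • (Ltc *ᵥ x) := by rw [Matrix.mul_assoc, hDD, Matrix.mul_one]
    have c2 : (Htc * Ric * Hc) *ᵥ z = (τ - 1) • (Htc *ᵥ y) := by
      calc (Htc * Ric * Hc) *ᵥ z = (Htc * Ric) *ᵥ (Hc *ᵥ z) := by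
            rw [Matrix.mulVec_mulVec]
        _ = (Htc * Ric) *ᵥ ((τ - 1) • (Rc *ᵥ y)) := by rw [hHz]
        _ = (τ - 1) • ((Htc * Ric) *ᵥ (Rc *ᵥ y)) := Matrix.mulVec_smul _ _ _
        _ = (τ - 1) • ((Htc * Ric * Rc) *ᵥ y) := by rw [Matrix.mulVec_mulVec]
        _ = (τ - 1) • (Htc *ᵥ y) := by rw [Matrix.mul_assoc, hRR, Matrix.mul_one]
    have hScMc : Sc = -Mc := by
      rw [hSc, hMc, hSM]
      ext i j
      simp [Matrix.map_apply]
    have hMz : Mc *ᵥ z = (τ - 1) • (τ • (-(Mc *ᵥ z))) := by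
      calc Mc *ᵥ z = (Ltc * Dic * Lc) *ᵥ z + (Htc * Ric * Hc) *ᵥ z := by
            rw [hMcEq, Matrix.add_mulVec]
        _ = (τ - 1) • (Ltc *ᵥ x + Htc *ᵥ y) := by rw [c1, c2, smul_add]
        _ = (τ - 1) • (τ • (Sc *ᵥ z)) := by rw [e3]
        _ = (τ - 1) • (τ • (-(Mc *ᵥ z))) := by rw [hScMc, Matrix.neg_mulVec]
    have hsmul : (τ ^ 2 - τ + 1) • (Mc *ᵥ z) = 0 := by
      have hneg : ((τ - 1) * τ) • (Mc *ᵥ z) = -(Mc *ᵥ z) := by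
        rw [mul_smul]
        rw [smul_neg, smul_neg] at hMz
        exact (neg_eq_iff_eq_neg.mpr hMz).symm
      have hco : τ ^ 2 - τ + 1 = 1 + (τ - 1) * τ := by ring
      rw [hco, add_smul, one_smul, hneg, add_neg_cancel]
    have hMcdet : IsUnit Mc.det := by
      rw [hMc, ← RingHom.mapMatrix_apply, ← RingHom.map_det]
      exact isUnit_iff_ne_zero.mpr (by
        simp only [hfdef, Complex.coe_algebraMap]
        exact_mod_cast hM.det_pos.ne')
    have hz0 : z = 0 := by
      refine aux_mulVec_eq_zero hMcdet ?_
      rcases smul_eq_zero.mp hsmul with h | h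
      · exact absurd h ht2
      · exact h
    have hDcdet : IsUnit Dc.det := by
      rw [hDc, ← RingHom.mapMatrix_apply, ← RingHom.map_det]
      exact isUnit_iff_ne_zero.mpr (by
        simp only [hfdef, Complex.coe_algebraMap]
        exact_mod_cast hD.det_pos.ne')
    have hRcdet : IsUnit Rc.det := by
      rw [hRc, ← RingHom.mapMatrix_apply, ← RingHom.map_det]
      exact isUnit_iff_ne_zero.mpr (by
        simp only [hfdef, Complex.coe_algebraMap]
        exact_mod_cast h𝓡.det_pos.ne')
    have hτ1 : τ - 1 ≠ 0 := sub_ne_zero.mpr ht1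
    have hx0 : x = 0 := by
      refine aux_mulVec_eq_zero hDcdet ?_
      have : (τ - 1) • (Dc *ᵥ x) = 0 := by
        rw [← hLz, hz0, Matrix.mulVec_zero]
      rcases smul_eq_zero.mp this with h | h
      · exact absurd h hτ1
      · exact h
    have hy0 : y = 0 := by
      refine aux_mulVec_eq_zero hRcdet ?_
      have : (τ - 1) • (Rc *ᵥ y) = 0 := by
        rw [← hHz, hz0, Matrix.mulVec_zero]
      rcases smul_eq_zero.mp this with h | h
      · exact absurd h hτ1
      · exact h
    apply hv.right
    rw [hv', hx0, hy0, hz0]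
    funext i; rcases i with (i | i) | i <;> rfl
  refine ⟨key, ?_⟩
  rcases key with h1 | h2
  · exact Or.inl h1
  · right
    have hs : ((Real.sqrt 3 : ℝ) : ℂ) * ((Real.sqrt 3 : ℝ) : ℂ) = 3 := by
      rw [← Complex.ofReal_mul, Real.mul_self_sqrt (by norm_num : (0:ℝ) ≤ 3)]
      norm_num
    have hfac : (τ - (1 + (Real.sqrt 3 : ℝ) * Complex.I) / 2) *
        (τ - (1 - (Real.sqrt 3 : ℝ) * Complex.I) / 2) = 0 := by
      linear_combination h2 - (Complex.I ^ 2 / 4) * hs - (3 / 4 : ℂ) * Complex.I_sq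
    rcases mul_eq_zero.mp hfac with h | h
    · exact Or.inl (sub_eq_zero.mp h)
    · exact Or.inr (sub_eq_zero.mp h)
end

section
/- Let m, q be positive integers, let D ∈ ℝ^{m×m} and 𝓡 ∈ ℝ^{q×q} be symmetric positive definite, let L ∈ ℝ^{m×m} be invertible, and let 𝓗 ∈ ℝ^{q×m}. Let 𝓐 = [[D, 0, L], [0, 𝓡, 𝓗], [Lᵀ, 𝓗ᵀ, 0]], let S = −Lᵀ D⁻¹ L − 𝓗ᵀ 𝓡⁻¹ 𝓗, and let 𝓟_T = [[D, 0, L], [0, 𝓡, 𝓗], [0, 0, S]] be the block triangular preconditioner with exact blocks. Then S and 𝓟_T are invertible and (𝓟_T⁻¹𝓐 − I)² = 0; in particular every eigenvalue of 𝓟_T⁻¹𝓐 over ℂ equals 1. -/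
open Matrix

-- helper: conjugation of a PosDef matrix by an invertible matrix over ℝ
lemma posDef_transpose_mul_mul {n : Type*} [Fintype n] [DecidableEq n]
    {A L : Matrix n n ℝ} (hA : A.PosDef) (hL : IsUnit L) :
    (Lᵀ * A * L).PosDef := by
  refine posDef_iff_dotProduct_mulVec.mpr ⟨?_, ?_⟩
  · rw [← conjTranspose_eq_transpose_of_trivial]
    exact isHermitian_conjTranspose_mul_mul L hA.isHermitian
  · intro x hx
    have hinj : Function.Injective L.mulVec := mulVec_injective_iff_isUnit.mpr hL
    have hx' : L *ᵥ x ≠ 0 := fun h => hx (hinj (by simpa using h))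
    have := hA.dotProduct_mulVec_pos hx'
    simpa [mul_assoc, ← mulVec_mulVec, dotProduct_mulVec, vecMul_transpose] using this

-- nilpotent of square zero perturbation of identity: units
lemma isUnit_smul_one_sub_of_sq_eq_zero {n : Type*} [Fintype n] [DecidableEq n]
    {N : Matrix n n ℂ} (hN : N ^ 2 = 0) {c : ℂ} (hc : c ≠ 0) :
    IsUnit (c • (1 : Matrix n n ℂ) - N) := by
  have hNN : N * N = 0 := by rw [← sq]; exact hN
  have h1 : (c • (1 : Matrix n n ℂ) - N) * (c • 1 + N) = (c * c) • 1 := by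
    rw [sub_mul, mul_add, mul_add, smul_mul_assoc, smul_mul_assoc, one_mul, one_mul,
      mul_smul_comm, mul_one, smul_smul, hNN]
    abel
  have h2 : (c • (1 : Matrix n n ℂ) + N) * (c • 1 - N) = (c * c) • 1 := by
    rw [add_mul, mul_sub, mul_sub, smul_mul_assoc, smul_mul_assoc, one_mul, one_mul,
      mul_smul_comm, mul_one, smul_smul, hNN]
    abel
  have hcc : c * c ≠ 0 := mul_ne_zero hc hc
  refine ⟨⟨c • 1 - N, (c * c)⁻¹ • (c • 1 + N), ?_, ?_⟩, rfl⟩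
  · rw [mul_smul_comm, h1, smul_smul, inv_mul_cancel₀ hcc, one_smul]
  · rw [smul_mul_assoc, h2, smul_smul, inv_mul_cancel₀ hcc, one_smul]


/-- With the exact block triangular Schur complement preconditioner
`𝓟_T = [[D, 0, L], [0, 𝓡, 𝓗], [0, 0, S]]`, `S = −LᵀD⁻¹L − 𝓗ᵀ𝓡⁻¹𝓗`, both `S` and
`𝓟_T` are invertible, `(𝓟_T⁻¹𝓐 − I)² = 0`, and every complex eigenvalue of
`𝓟_T⁻¹𝓐` equals `1`. -/
theorem block_triangular_schur_prec_eigenvalues (m q : ℕ) (hm : 0 < m) (hq : 0 < q)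
    (D : Matrix (Fin m) (Fin m) ℝ) (hD : D.PosDef)
    (𝓡 : Matrix (Fin q) (Fin q) ℝ) (h𝓡 : 𝓡.PosDef)
    (L : Matrix (Fin m) (Fin m) ℝ) (hL : IsUnit L)
    (𝓗 : Matrix (Fin q) (Fin m) ℝ) :
    IsUnit (-(Lᵀ * D⁻¹ * L) - 𝓗ᵀ * 𝓡⁻¹ * 𝓗) ∧
      IsUnit (block3 D 0 L 0 𝓡 𝓗 0 0 (-(Lᵀ * D⁻¹ * L) - 𝓗ᵀ * 𝓡⁻¹ * 𝓗)) ∧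
      ((block3 D 0 L 0 𝓡 𝓗 0 0 (-(Lᵀ * D⁻¹ * L) - 𝓗ᵀ * 𝓡⁻¹ * 𝓗))⁻¹ *
          block3 D 0 L 0 𝓡 𝓗 Lᵀ 𝓗ᵀ 0 - 1) ^ 2 = 0 ∧
      ∀ τ ∈ spectrum ℂ
          (((block3 D 0 L 0 𝓡 𝓗 0 0 (-(Lᵀ * D⁻¹ * L) - 𝓗ᵀ * 𝓡⁻¹ * 𝓗))⁻¹ *
              block3 D 0 L 0 𝓡 𝓗 Lᵀ 𝓗ᵀ 0).map (algebraMap ℝ ℂ)),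
        τ = 1 := by
  set S : Matrix (Fin m) (Fin m) ℝ := -(Lᵀ * D⁻¹ * L) - 𝓗ᵀ * 𝓡⁻¹ * 𝓗 with hS
  -- S is invertible
  have hsemi : (𝓗ᵀ * 𝓡⁻¹ * 𝓗).PosSemidef := by
    have := (h𝓡.inv.posSemidef).conjTranspose_mul_mul_same 𝓗
    rwa [conjTranspose_eq_transpose_of_trivial] at this
  have hnegS : (-S).PosDef := by
    have h1 : (Lᵀ * D⁻¹ * L).PosDef := posDef_transpose_mul_mul hD.inv hL
    have : -S = Lᵀ * D⁻¹ * L + 𝓗ᵀ * 𝓡⁻¹ * 𝓗 := by rw [hS]; abel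
    rw [this]
    exact h1.add_posSemidef hsemi
  have hSunit : IsUnit S := by
    have := hnegS.isUnit
    rwa [IsUnit.neg_iff] at this
  have hSdet : IsUnit S.det := (isUnit_iff_isUnit_det S).mp hSunit
  -- relevant blocks
  set B : Matrix (Fin m ⊕ Fin q) (Fin m ⊕ Fin q) ℝ := fromBlocks D 0 0 𝓡 with hB
  set R : Matrix (Fin m ⊕ Fin q) (Fin m) ℝ := fromRows L 𝓗 with hR
  set C : Matrix (Fin m) (Fin m ⊕ Fin q) ℝ := fromCols Lᵀ 𝓗ᵀ with hC
  have hDdet : IsUnit D.det := (isUnit_iff_isUnit_det D).mp hD.isUnit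
  have h𝓡det : IsUnit 𝓡.det := (isUnit_iff_isUnit_det 𝓡).mp h𝓡.isUnit
  have hBdet : IsUnit B.det := by
    rw [hB, det_fromBlocks_zero₂₁]
    exact hDdet.mul h𝓡det
  have hBinv : B⁻¹ = fromBlocks D⁻¹ 0 0 𝓡⁻¹ := by
    apply inv_eq_right_inv
    rw [hB, fromBlocks_multiply]
    simp [mul_nonsing_inv _ hDdet, mul_nonsing_inv _ h𝓡det, fromBlocks_one]
  have hBB : B * B⁻¹ = 1 := mul_nonsing_inv _ hBdet
  -- P and A
  set P : Matrix ((Fin m ⊕ Fin q) ⊕ Fin m) ((Fin m ⊕ Fin q) ⊕ Fin m) ℝ :=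
    block3 D 0 L 0 𝓡 𝓗 0 0 S with hP
  set A : Matrix ((Fin m ⊕ Fin q) ⊕ Fin m) ((Fin m ⊕ Fin q) ⊕ Fin m) ℝ :=
    block3 D 0 L 0 𝓡 𝓗 Lᵀ 𝓗ᵀ 0 with hA
  have hPdef : P = fromBlocks B R 0 S := by
    rw [hP, hB, hR, block3, fromCols_zero]
  have hAdef : A = fromBlocks B R C 0 := by
    rw [hA, hB, hR, hC]; rfl
  have hPdet : IsUnit P.det := by
    rw [hPdef, det_fromBlocks_zero₂₁]
    exact hBdet.mul hSdet
  have hPunit : IsUnit P := (isUnit_iff_isUnit_det P).mpr hPdet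
  -- explicit inverse of P
  set Q : Matrix ((Fin m ⊕ Fin q) ⊕ Fin m) ((Fin m ⊕ Fin q) ⊕ Fin m) ℝ :=
    fromBlocks B⁻¹ (-(B⁻¹ * R * S⁻¹)) 0 S⁻¹ with hQ
  have hPQ : P * Q = 1 := by
    rw [hPdef, hQ, fromBlocks_multiply]
    have h12 : B * -(B⁻¹ * R * S⁻¹) + R * S⁻¹ = 0 := by
      rw [Matrix.mul_neg, ← Matrix.mul_assoc, ← Matrix.mul_assoc, hBB, Matrix.one_mul, neg_add_cancel]
    rw [hBB, h12, Matrix.zero_mul, Matrix.zero_mul, zero_add,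
      mul_nonsing_inv _ hSdet]
    simp [fromBlocks_one]
  have hPinv : P⁻¹ = Q := inv_eq_right_inv hPQ
  -- E = A - P
  have hE : A - P = fromBlocks 0 0 C (-S) := by
    rw [hAdef, hPdef, sub_eq_add_neg, fromBlocks_neg, fromBlocks_add]
    simp
  -- the Schur identity: C * B⁻¹ * R = -S
  have hCBR : C * B⁻¹ * R = -S := by
    rw [hBinv, hC, hR, fromCols_mul_fromBlocks, fromCols_mul_fromRows]
    simp [hS, mul_assoc]
    abel
  -- key computation: (A - P) * Q * (A - P) = 0
  have hkey : (A - P) * Q * (A - P) = 0 := by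
    rw [hE, hQ, fromBlocks_multiply, fromBlocks_multiply]
    have h22 : C * -(B⁻¹ * R * S⁻¹) + -S * S⁻¹ = 0 := by
      rw [Matrix.mul_neg, ← Matrix.mul_assoc, ← Matrix.mul_assoc, hCBR, Matrix.neg_mul,
        mul_nonsing_inv _ hSdet]
      abel
    rw [h22]
    simp [fromBlocks_zero]
  have hPP : P⁻¹ * P = 1 := nonsing_inv_mul _ hPdet
  -- third claim
  have hsq : (P⁻¹ * A - 1) ^ 2 = 0 := by
    have h1 : P⁻¹ * A - 1 = P⁻¹ * (A - P) := by rw [mul_sub, hPP]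
    have h0 : (A - P) * P⁻¹ * (A - P) = 0 := by rw [hPinv]; exact hkey
    rw [h1, sq, mul_assoc, ← mul_assoc (A - P), h0, Matrix.mul_zero]
  refine ⟨hSunit, hPunit, hsq, ?_⟩
  -- spectrum claim
  intro τ hτ
  by_contra hτ1
  rw [spectrum.mem_iff] at hτ
  apply hτ
  set φ : Matrix ((Fin m ⊕ Fin q) ⊕ Fin m) ((Fin m ⊕ Fin q) ⊕ Fin m) ℝ →+*
      Matrix ((Fin m ⊕ Fin q) ⊕ Fin m) ((Fin m ⊕ Fin q) ⊕ Fin m) ℂ :=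
    (algebraMap ℝ ℂ).mapMatrix with hφ
  set M : Matrix ((Fin m ⊕ Fin q) ⊕ Fin m) ((Fin m ⊕ Fin q) ⊕ Fin m) ℂ :=
    φ (P⁻¹ * A) with hM
  have hN2 : (M - 1) ^ 2 = 0 := by
    have := congrArg φ hsq
    rwa [map_pow, map_sub, ← hM, _root_.map_one, _root_.map_zero] at this
  have hc : τ - 1 ≠ 0 := sub_ne_zero.mpr hτ1
  have := isUnit_smul_one_sub_of_sq_eq_zero hN2 hc
  convert this using 1
  rw [Algebra.algebraMap_eq_smul_one, sub_smul, one_smul]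
  abel
end

section
/- Let n, p, N be positive integers, and for i = 1,…,N let M_i, Q_i ∈ ℝ^{n×n}, for i = 0,…,N let R_i ∈ ℝ^{p×p} and H_i ∈ ℝ^{p×n}, and let B ∈ ℝ^{n×n}. Let Λ, X, 𝕓 ∈ ℝ^{n×(N+1)}, U, 𝕕 ∈ ℝ^{p×(N+1)}, and set λ = vec(Λ), μ = vec(U), x = vec(X), b = vec(𝕓), d = vec(𝕕). Then the three Kronecker-form vector equations (F₁ ⊗ B + Σ_{i=1}^{N} F_{i+1} ⊗ Q_i) λ + (I_{N+1} ⊗ I_n + Σ_{i=1}^{N} C_i ⊗ M_i) x = b, (Σ_{i=0}^{N} F_{i+1} ⊗ R_i) μ + (Σ_{i=0}^{N} F_{i+1} ⊗ H_i) x = d, and (I_{N+1} ⊗ I_n + Σ_{i=1}^{N} C_iᵀ ⊗ M_iᵀ) λ + (Σ_{i=0}^{N} F_{i+1} ⊗ H_iᵀ) μ = 0 hold if and only if the three matrix equations B Λ F₁ + Σ_{i=1}^{N} Q_i Λ F_{i+1} + X + Σ_{i=1}^{N} M_i X C_iᵀ = 𝕓, Σ_{i=0}^{N} R_i U F_{i+1}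 + Σ_{i=0}^{N} H_i X F_{i+1} = 𝕕, and Λ + Σ_{i=1}^{N} M_iᵀ Λ C_i + Σ_{i=0}^{N} H_iᵀ U F_{i+1} = 0 hold. -/
open Matrix Kronecker

/-- Column-stacking vectorisation: for `Z ∈ ℝ^{a×c}`, `vec(Z)` is indexed by pairs
`(j,i)` with `vec(Z)_{(j,i)} = Z_{i,j}`. -/
def vecOf {a c : ℕ} (Z : Matrix (Fin a) (Fin c) ℝ) : Fin c × Fin a → ℝ :=
  fun p => Z p.2 p.1

/-- `F i ∈ ℝ^{(N+1)×(N+1)}` is the matrix with a `1` in entry `(i,i)` and zeros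
elsewhere (0-indexed; `F i` is the paper's `F_{i+1}`). -/
def Fdiag (N : ℕ) (i : Fin (N + 1)) : Matrix (Fin (N + 1)) (Fin (N + 1)) ℝ :=
  Matrix.single i i 1

/-- `C i ∈ ℝ^{(N+1)×(N+1)}` is the matrix with `−1` in entry `(i+1,i)` and zeros
elsewhere (0-indexed; `C i` is the paper's `C_{i+1}`). -/
def Csingle (N : ℕ) (i : Fin N) : Matrix (Fin (N + 1)) (Fin (N + 1)) ℝ :=
  Matrix.single i.succ i.castSucc (-1)

lemma vecOf_inj {a c : ℕ} {Z W : Matrix (Fin a) (Fin c) ℝ} :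
    vecOf Z = vecOf W ↔ Z = W := by
  constructor
  · intro h; ext i j; exact congrFun h (j, i)
  · rintro rfl; rfl

lemma kron_mulVec {a b c : ℕ} (A : Matrix (Fin c) (Fin c) ℝ)
    (Bm : Matrix (Fin a) (Fin b) ℝ) (Z : Matrix (Fin b) (Fin c) ℝ) :
    (A ⊗ₖ Bm) *ᵥ vecOf Z = vecOf (Bm * Z * Aᵀ) := by
  funext q
  obtain ⟨j, i⟩ := q
  simp only [Matrix.mulVec, vecOf, dotProduct, Matrix.kroneckerMap_apply,
    Matrix.mul_apply, Matrix.transpose_apply, Fintype.sum_prod_type, Finset.sum_mul]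
  refine Finset.sum_congr rfl fun x _ => Finset.sum_congr rfl fun y _ => ?_
  ring

lemma vecOf_add {a c : ℕ} (Z W : Matrix (Fin a) (Fin c) ℝ) :
    vecOf (Z + W) = vecOf Z + vecOf W := rfl

lemma vecOf_sum {a c ι : ℕ} (f : Fin ι → Matrix (Fin a) (Fin c) ℝ) :
    vecOf (∑ i, f i) = ∑ i, vecOf (f i) := by
  funext q; simp [vecOf, Finset.sum_apply, Matrix.sum_apply]

lemma sum_mulVec' {m k ι : Type*} [Fintype k] [Fintype ι] (A : ι → Matrix m k ℝ)
    (v : k → ℝ) : (∑ i, A i) *ᵥ v = ∑ i, (A i) *ᵥ v := by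
  funext j
  simp only [Matrix.mulVec, dotProduct, Matrix.sum_apply, Finset.sum_apply, Finset.sum_mul]
  exact Finset.sum_comm

lemma vecOf_zero {a c : ℕ} : vecOf (0 : Matrix (Fin a) (Fin c) ℝ) = 0 := rfl

lemma Fdiag_transpose (N : ℕ) (i : Fin (N + 1)) : (Fdiag N i)ᵀ = Fdiag N i := by
  ext j k
  simp [Fdiag, Matrix.single, and_comm]

/-- Time-dependent Kronecker formulation of the weak constraint 4D-Var saddle point
system: the three Kronecker-form vector equations hold iff the corresponding
generalised matrix equations hold.  Here `M i`, `Q i` are the paper's `M_{i+1}`,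
`Q_{i+1}` (`i = 0,…,N−1`), and `R i`, `H i` are the paper's `R_i`, `H_i`
(`i = 0,…,N`). -/
theorem time_dependent_kronecker_iff_matrix (n p N : ℕ) (hn : 0 < n) (hp : 0 < p) (hN : 0 < N)
    (M Q : Fin N → Matrix (Fin n) (Fin n) ℝ)
    (R : Fin (N + 1) → Matrix (Fin p) (Fin p) ℝ)
    (H : Fin (N + 1) → Matrix (Fin p) (Fin n) ℝ)
    (B : Matrix (Fin n) (Fin n) ℝ)
    (Λ X 𝕓 : Matrix (Fin n) (Fin (N + 1)) ℝ)
    (U 𝕕 : Matrix (Fin p) (Fin (N + 1)) ℝ) :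
    ((Fdiag N 0 ⊗ₖ B + ∑ i : Fin N, Fdiag N i.succ ⊗ₖ Q i) *ᵥ vecOf Λ +
        ((1 : Matrix (Fin (N + 1)) (Fin (N + 1)) ℝ) ⊗ₖ (1 : Matrix (Fin n) (Fin n) ℝ) +
          ∑ i : Fin N, Csingle N i ⊗ₖ M i) *ᵥ vecOf X = vecOf 𝕓 ∧
      (∑ i : Fin (N + 1), Fdiag N i ⊗ₖ R i) *ᵥ vecOf U +
        (∑ i : Fin (N + 1), Fdiag N i ⊗ₖ H i) *ᵥ vecOf X = vecOf 𝕕 ∧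
      ((1 : Matrix (Fin (N + 1)) (Fin (N + 1)) ℝ) ⊗ₖ (1 : Matrix (Fin n) (Fin n) ℝ) +
          ∑ i : Fin N, (Csingle N i)ᵀ ⊗ₖ (M i)ᵀ) *ᵥ vecOf Λ +
        (∑ i : Fin (N + 1), Fdiag N i ⊗ₖ (H i)ᵀ) *ᵥ vecOf U = 0) ↔
    (B * Λ * Fdiag N 0 + ∑ i : Fin N, Q i * Λ * Fdiag N i.succ + X +
        ∑ i : Fin N, M i * X * (Csingle N i)ᵀ = 𝕓 ∧
      ∑ i : Fin (N + 1), R i * U * Fdiag N i +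
        ∑ i : Fin (N + 1), H i * X * Fdiag N i = 𝕕 ∧
      Λ + ∑ i : Fin N, (M i)ᵀ * Λ * Csingle N i +
        ∑ i : Fin (N + 1), (H i)ᵀ * U * Fdiag N i = 0) := by
  simp only [Matrix.add_mulVec, sum_mulVec', kron_mulVec, Fdiag_transpose,
    Matrix.transpose_transpose, Matrix.transpose_one, Matrix.one_mul, Matrix.mul_one,
    ← vecOf_sum, ← vecOf_add, ← vecOf_zero, vecOf_inj]
  constructor <;> rintro ⟨h1, h2, h3⟩ <;> refine ⟨?_, ?_, ?_⟩ <;>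
    [skip; exact h2; skip; skip; exact h2; skip] <;>
    [rw [← h1]; rw [← h3]; rw [← h1]; rw [← h3]] <;> abel
end
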